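/- arXiv:1802.09963 — 5 statements merged into one kernel-verified Lean document; each statement's English description precedes it below -/
import Mathlib

section
/- Let (a_i)_{i=1}^n be a nondecreasing sequence of real numbers and let τ > 0. If π is a permutation of {1,...,n} such that π(i) < π(j) whenever a_j - a_i > τ, then |a_{π(i)} - a_i| ≤ τ for all i ∈ {1,...,n}. -/
theorem stmt_0 (n : ℕ) (a : Fin n → ℝ) (ha : Monotone a) (τ : ℝ) (hτ : 0 < τ)
    (π : Equiv.Perm (Fin n))
    (hπ : ∀ i j : Fin n, a j - a i > τ → π i < π j) :
    ∀ i : Fin n, |a (π i) - a i| ≤ τ := by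
  intro i
  rw [abs_le]
  constructor
  · -- -τ ≤ a (π i) - a i, i.e. not (a i - a (π i) > τ)
    by_contra h
    push_neg at h
    have hmap : ∀ k ∈ Finset.Iic (π i), π k ∈ Finset.Iio (π i) := by
      intro k hk
      simp only [Finset.mem_Iic] at hk
      simp only [Finset.mem_Iio]
      exact hπ k i (by have := ha hk; linarith)
    have hcard := Finset.card_le_card_of_injOn π hmap
      (fun x _ y _ hxy => π.injective hxy)
    rw [Fin.card_Iic, Fin.card_Iio] at hcard
    omega
  · by_contra h
    push_neg at h
    have hmap : ∀ k ∈ Finset.Ici (π i), π k ∈ Finset.Ioi (π i) := by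
      intro k hk
      simp only [Finset.mem_Ici] at hk
      simp only [Finset.mem_Ioi]
      exact hπ i k (by have := ha hk; linarith)
    have hcard := Finset.card_le_card_of_injOn π hmap
      (fun x _ y _ hxy => π.injective hxy)
    rw [Fin.card_Ici, Fin.card_Ioi] at hcard
    have := (π i).isLt
    omega
end

section
/- For any vector v ∈ ℝ^n with n ≥ 1, we have ‖v‖_2² ≤ var(v)·‖v‖_1 + ‖v‖_1²/n, where var(v) = max_i v_i − min_i v_i. -/
theorem stmt_1 (n : ℕ) (hn : 0 < n) (v : Fin n → ℝ) :
    haveI : Nonempty (Fin n) := Fin.pos_iff_nonempty.mp hn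
    ∑ i, (v i) ^ 2 ≤
      (Finset.univ.sup' Finset.univ_nonempty v - Finset.univ.inf' Finset.univ_nonempty v) *
          (∑ i, |v i|) + (∑ i, |v i|) ^ 2 / n := by
  haveI : Nonempty (Fin n) := Fin.pos_iff_nonempty.mp hn
  set M := Finset.univ.sup' Finset.univ_nonempty v with hM
  set m := Finset.univ.inf' Finset.univ_nonempty v with hm
  set S := ∑ i, |v i| with hS
  set c := (∑ i, v i) / n with hc
  have hn' : (0:ℝ) < n := Nat.cast_pos.mpr hn
  have hvM : ∀ i, v i ≤ M := fun i => Finset.le_sup' v (Finset.mem_univ i)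
  have hmv : ∀ i, m ≤ v i := fun i => Finset.inf'_le v (Finset.mem_univ i)
  have hsumM : ∑ i, v i ≤ n * M := by
    calc ∑ i, v i ≤ ∑ _i : Fin n, M := Finset.sum_le_sum fun i _ => hvM i
    _ = n * M := by simp [mul_comm]
  have hsumm : (n:ℝ) * m ≤ ∑ i, v i := by
    calc (n:ℝ) * m = ∑ _i : Fin n, m := by simp [mul_comm]
    _ ≤ ∑ i, v i := Finset.sum_le_sum fun i _ => hmv i
  have hcM : c ≤ M := by rw [hc, div_le_iff₀ hn']; linarith [hsumM]
  have hmc : m ≤ c := by rw [hc, le_div_iff₀ hn']; linarith [hsumm]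
  have habs : |∑ i, v i| ≤ S := Finset.abs_sum_le_sum_abs _ _
  have hS0 : 0 ≤ S := Finset.sum_nonneg fun i _ => abs_nonneg _
  have key : ∑ i, (v i)^2 = (∑ i, (v i - c) * v i) + c * ∑ i, v i := by
    rw [Finset.mul_sum, ← Finset.sum_add_distrib]
    apply Finset.sum_congr rfl
    intro i _; ring
  rw [key]
  have h1 : ∑ i, (v i - c) * v i ≤ (M - m) * S := by
    rw [hS, Finset.mul_sum]
    refine Finset.sum_le_sum fun i _ => ?_
    calc (v i - c) * v i ≤ |(v i - c) * v i| := le_abs_self _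
    _ = |v i - c| * |v i| := abs_mul _ _
    _ ≤ (M - m) * |v i| := by
        apply mul_le_mul_of_nonneg_right _ (abs_nonneg _)
        rw [abs_le]
        constructor
        · linarith [hmv i, hcM]
        · linarith [hvM i, hmc]
  have h2 : c * ∑ i, v i ≤ S^2 / n := by
    have hc1 : c * ∑ i, v i ≤ |c| * |∑ i, v i| := by
      calc c * ∑ i, v i ≤ |c * ∑ i, v i| := le_abs_self _
      _ = |c| * |∑ i, v i| := abs_mul _ _
    have hcabs : |c| ≤ S / n := by
      rw [hc, abs_div, abs_of_pos hn']
      gcongr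
    calc c * ∑ i, v i ≤ |c| * |∑ i, v i| := hc1
    _ ≤ (S / n) * S := mul_le_mul hcabs habs (abs_nonneg _) (by positivity)
    _ = S^2 / n := by ring
  linarith
end

section
/- For all real numbers p, q with 1/2 ≤ p ≤ 3/4 and 1/2 ≤ q ≤ 3/4, the Kullback–Leibler divergence D(p‖q) = p·log(p/q) + (1−p)·log((1−p)/(1−q)) between Bernoulli(p) and Bernoulli(q) satisfies D(p‖q) ≤ (16/3)·(p − q)². -/
theorem stmt_3 (p q : ℝ) (hp : 1/2 ≤ p) (hp' : p ≤ 3/4) (hq : 1/2 ≤ q) (hq' : q ≤ 3/4) :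
    p * Real.log (p / q) + (1 - p) * Real.log ((1 - p) / (1 - q)) ≤
      (16 / 3) * (p - q) ^ 2 := by
  have hp0 : (0:ℝ) < p := by linarith
  have hq0 : (0:ℝ) < q := by linarith
  have hp1 : (0:ℝ) < 1 - p := by linarith
  have hq1 : (0:ℝ) < 1 - q := by linarith
  have h1 : Real.log (p / q) ≤ p / q - 1 :=
    Real.log_le_sub_one_of_pos (by positivity)
  have h2 : Real.log ((1 - p) / (1 - q)) ≤ (1 - p) / (1 - q) - 1 :=
    Real.log_le_sub_one_of_pos (by positivity)
  have key : p * (p / q - 1) + (1 - p) * ((1 - p) / (1 - q) - 1)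
      = (p - q) ^ 2 / (q * (1 - q)) := by
    field_simp
    ring
  have hb : (p - q) ^ 2 / (q * (1 - q)) ≤ (16 / 3) * (p - q) ^ 2 := by
    rw [div_le_iff₀ (by positivity)]
    nlinarith [mul_nonneg (mul_nonneg (by linarith : (0:ℝ) ≤ q - 1/4) (by linarith : (0:ℝ) ≤ 3/4 - q)) (sq_nonneg (p - q)), sq_nonneg (p - q)]
  calc p * Real.log (p / q) + (1 - p) * Real.log ((1 - p) / (1 - q))
      ≤ p * (p / q - 1) + (1 - p) * ((1 - p) / (1 - q) - 1) := by
        have a1 := mul_le_mul_of_nonneg_left h1 hp0.le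
        have a2 := mul_le_mul_of_nonneg_left h2 hp1.le
        linarith
    _ = (p - q) ^ 2 / (q * (1 - q)) := key
    _ ≤ (16 / 3) * (p - q) ^ 2 := hb
end

section
/- Let n, m ≥ 1 and let J_1, …, J_ℓ be a partition of {1,...,m} into contiguous intervals with J_k preceding J_{k+1}; write a_k = min J_k, b_k = max J_k, m_k = |J_k|. Let A ∈ [0,1]^{n×m} have nondecreasing rows and nondecreasing columns. Suppose τ ≥ 0 satisfies Σ_{i=1}^n (A_{i,b_k} − A_{i,a_k}) ≤ τ for each k, and there exist positive reals ρ, ρ_1, …, ρ_ℓ and a permutation π of {1,...,n} such that for every i: Σ_{j=1}^m |A_{π(i),j} − A_{i,j}| ≤ ρ and Σ_{j∈J_k} |A_{π(i),j} − A_{i,j}| ≤ ρ_k for each k. Then Σ_{i=1}^n Σ_{j=1}^m (A_{π(i),j} − A_{i,j})² ≤ 2τ·Σ_{k=1}^ℓ ρ_k + n·ρ·max_{k∈[ℓ]} (ρ_k/m_k). -/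
/-!
Fix a row `i` and a block `J_k`. Since the block bound gives `∑_{j ∈ J_k} |A_{π i, j} - A_{i, j}| ≤ ρ_k`,
some column `j₀ ∈ J_k` has `|A_{π i, j₀} - A_{i, j₀}| ≤ ρ_k / m_k`. By row monotonicity, every entry of
row `i` on `J_k` lies within the increment `g_{i,k} = A_{i, b_k} - A_{i, a_k}` of its entry at `j₀`,
so `|A_{π i, j} - A_{i, j}| ≤ ρ_k / m_k + g_{i,k} + g_{π i, k}` on `J_k`. Writing `x² ≤ |x| · (that bound)`
and summing over `J_k` gives `(ρ_k / m_k) ∑_{J_k} |x| + (g_{i,k} + g_{π i,k}) ρ_k`. Summing over the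
blocks, the first terms add up to at most `ρ · max_k ρ_k / m_k` per row; summing over the rows, the
second terms give `2 ∑_k ρ_k ∑_i g_{i,k} ≤ 2 τ ∑_k ρ_k`, because `π` permutes the rows.
-/

open Finset Function

section Partition

variable {α ι : Type*} {J : ι → Finset α}

theorem pairwise_disjoint_of_forall_lt [Preorder α] [LinearOrder ι]
    (h : ∀ k k' : ι, k < k' → ∀ j ∈ J k, ∀ j' ∈ J k', j < j') : Pairwise (Disjoint on J) := by
  intro k k' hkk'
  refine Finset.disjoint_left.mpr fun j hj hj' => ?_
  rcases hkk'.lt_or_gt with hlt | hlt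
  · exact lt_irrefl j (h k k' hlt j hj j hj')
  · exact lt_irrefl j (h k' k hlt j hj' j hj)

theorem sum_univ_eq_sum_sum_of_partition [Fintype α] [Fintype ι] {M : Type*} [AddCommMonoid M]
    (hdisj : Pairwise (Disjoint on J)) (hcover : ∀ j, ∃ k, j ∈ J k) (f : α → M) : ∑ j, f j = ∑ k, ∑ j ∈ J k, f j := by
  classical
  have huniv : (univ : Finset α) = univ.biUnion J := by
    ext j
    simpa using hcover j
  rw [huniv, sum_biUnion (hdisj.set_pairwise _)]

end Partition

theorem Finset.exists_le_div_card_of_sum_le {α : Type*} {s : Finset α} (hs : s.Nonempty)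
    {f : α → ℝ} {c : ℝ} (h : ∑ j ∈ s, f j ≤ c) : ∃ j ∈ s, f j ≤ c / #s := by
  have hcard : (#s : ℝ) ≠ 0 := by exact_mod_cast hs.card_pos.ne'
  refine exists_le_of_sum_le hs ?_
  rwa [sum_const, nsmul_eq_mul, mul_div_cancel₀ _ hcard]

section Increment

variable {α : Type*} [LinearOrder α]

/-- For `u = A i` and `s = J_k` this is `A_{i, b_k} - A_{i, a_k}`. -/
def increment (u : α → ℝ) (s : Finset α) (hs : s.Nonempty) : ℝ :=
  u (s.max' hs) - u (s.min' hs)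

variable {u v : α → ℝ} {s : Finset α} (hs : s.Nonempty)

theorem Monotone.increment_nonneg (hu : Monotone u) : 0 ≤ increment u s hs :=
  sub_nonneg.mpr (hu (s.min'_le _ (s.max'_mem hs)))

theorem Monotone.abs_sub_le_increment (hu : Monotone u) {j j₀ : α} (hj : j ∈ s) (hj₀ : j₀ ∈ s) :
    |u j - u j₀| ≤ increment u s hs := by
  have h₁ := hu (s.min'_le j hj)
  have h₂ := hu (s.le_max' j hj)
  have h₃ := hu (s.min'_le j₀ hj₀)
  have h₄ := hu (s.le_max' j₀ hj₀)
  rw [abs_sub_le_iff, increment]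
  constructor <;> linarith

theorem abs_sub_le_div_card_add_increment (hu : Monotone u) (hv : Monotone v) {r : ℝ}
    (hr : ∑ j ∈ s, |u j - v j| ≤ r) {j : α} (hj : j ∈ s) :
    |u j - v j| ≤ r / #s + increment u s hs + increment v s hs := by
  obtain ⟨j₀, hj₀, hsmall⟩ := exists_le_div_card_of_sum_le hs hr
  calc |u j - v j| = |(u j₀ - v j₀) + (u j - u j₀) + (v j₀ - v j)| := by ring_nf
    _ ≤ |u j₀ - v j₀| + |u j - u j₀| + |v j - v j₀| := by
        rw [abs_sub_comm (v j)]
        exact abs_add_three _ _ _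
    _ ≤ _ := by
        gcongr
        · exact hu.abs_sub_le_increment hs hj hj₀
        · exact hv.abs_sub_le_increment hs hj hj₀

theorem sum_sq_sub_le (hu : Monotone u) (hv : Monotone v) {r : ℝ}
    (hr : ∑ j ∈ s, |u j - v j| ≤ r) :
    ∑ j ∈ s, (u j - v j) ^ 2 ≤
      r / #s * ∑ j ∈ s, |u j - v j| + (increment u s hs + increment v s hs) * r := by
  calc ∑ j ∈ s, (u j - v j) ^ 2
      ≤ ∑ j ∈ s, (r / #s + increment u s hs + increment v s hs) * |u j - v j| := by
        refine sum_le_sum fun j hj => ?_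
        rw [← sq_abs, sq]
        gcongr
        exact abs_sub_le_div_card_add_increment hs hu hv hr hj
    _ = r / #s * ∑ j ∈ s, |u j - v j| +
          (increment u s hs + increment v s hs) * ∑ j ∈ s, |u j - v j| := by
        rw [← mul_sum]
        ring
    _ ≤ _ := by
        have := hu.increment_nonneg hs
        have := hv.increment_nonneg hs
        gcongr

end Increment

theorem sum_sq_sub_le_of_partition {α ι : Type*} [LinearOrder α] [Fintype α] [Fintype ι]
    {J : ι → Finset α} (hdisj : Pairwise (Disjoint on J)) (hcover : ∀ j, ∃ k, j ∈ J k)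
    (hne : ∀ k, (J k).Nonempty) {u v : α → ℝ} (hu : Monotone u) (hv : Monotone v)
    {ρ S : ℝ} {ρk : ι → ℝ} (hρ : ∑ j, |u j - v j| ≤ ρ)
    (hρk : ∀ k, ∑ j ∈ J k, |u j - v j| ≤ ρk k) (hS : ∀ k, ρk k / #(J k) ≤ S) (hS0 : 0 ≤ S) :
    ∑ j, (u j - v j) ^ 2 ≤
      S * ρ + ∑ k, (increment u (J k) (hne k) + increment v (J k) (hne k)) * ρk k := by
  have hsplit (f : α → ℝ) := sum_univ_eq_sum_sum_of_partition hdisj hcover f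
  calc ∑ j, (u j - v j) ^ 2 = ∑ k, ∑ j ∈ J k, (u j - v j) ^ 2 := hsplit _
    _ ≤ ∑ k, (ρk k / #(J k) * ∑ j ∈ J k, |u j - v j| +
          (increment u (J k) (hne k) + increment v (J k) (hne k)) * ρk k) :=
        sum_le_sum fun k _ => sum_sq_sub_le (hne k) hu hv (hρk k)
    _ ≤ ∑ k, (S * ∑ j ∈ J k, |u j - v j| +
          (increment u (J k) (hne k) + increment v (J k) (hne k)) * ρk k) := by
        gcongr with k
        exact hS k
    _ = S * ∑ j, |u j - v j| +
          ∑ k, (increment u (J k) (hne k) + increment v (J k) (hne k)) * ρk k := by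
        rw [sum_add_distrib, ← mul_sum, ← hsplit]
    _ ≤ _ := by gcongr

theorem stmt_5_general (n m ℓ : ℕ) (hℓ : 0 < ℓ)
    (J : Fin ℓ → Finset (Fin m)) (hne : ∀ k, (J k).Nonempty)
    (hcover : ∀ j : Fin m, ∃ k, j ∈ J k)
    (horder : ∀ k k' : Fin ℓ, k < k' → ∀ j ∈ J k, ∀ j' ∈ J k', j < j')
    (A : Fin n → Fin m → ℝ)
    (hrow : ∀ i, Monotone (A i))
    (τ : ℝ)
    (hτbd : ∀ k, ∑ i, (A i ((J k).max' (hne k)) - A i ((J k).min' (hne k))) ≤ τ)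
    (ρ : ℝ) (ρk : Fin ℓ → ℝ) (hρk : ∀ k, 0 < ρk k)
    (π : Equiv.Perm (Fin n))
    (hrowbd : ∀ i, ∑ j, |A (π i) j - A i j| ≤ ρ)
    (hblockbd : ∀ i k, ∑ j ∈ J k, |A (π i) j - A i j| ≤ ρk k) :
    haveI : Nonempty (Fin ℓ) := Fin.pos_iff_nonempty.mp hℓ
    ∑ i, ∑ j, (A (π i) j - A i j) ^ 2 ≤
      2 * τ * ∑ k, ρk k +
        n * ρ * Finset.univ.sup' Finset.univ_nonempty (fun k => ρk k / (J k).card) := by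
  have : Nonempty (Fin ℓ) := Fin.pos_iff_nonempty.mp hℓ
  set S := univ.sup' univ_nonempty (fun k => ρk k / #(J k))
  have hS (k : Fin ℓ) : ρk k / #(J k) ≤ S := le_sup' (fun k => ρk k / #(J k)) (mem_univ k)
  have hS0 : 0 ≤ S := (div_nonneg (hρk ⟨0, hℓ⟩).le (Nat.cast_nonneg _)).trans (hS ⟨0, hℓ⟩)
  have hincr (k : Fin ℓ) :
      ∑ i, (increment (A (π i)) (J k) (hne k) + increment (A i) (J k) (hne k)) ≤ 2 * τ := by
    rw [sum_add_distrib, Equiv.sum_comp π fun i => increment (A i) (J k) (hne k)]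
    have hτk : ∑ i, increment (A i) (J k) (hne k) ≤ τ := hτbd k
    linarith
  calc ∑ i, ∑ j, (A (π i) j - A i j) ^ 2
      ≤ ∑ i, (S * ρ + ∑ k,
          (increment (A (π i)) (J k) (hne k) + increment (A i) (J k) (hne k)) * ρk k) :=
        sum_le_sum fun i _ => sum_sq_sub_le_of_partition (pairwise_disjoint_of_forall_lt horder)
          hcover hne (hrow (π i)) (hrow i) (hrowbd i) (hblockbd i) hS hS0
    _ = ∑ k, (∑ i, (increment (A (π i)) (J k) (hne k) + increment (A i) (J k) (hne k))) * ρk k +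
          n * ρ * S := by
        rw [sum_add_distrib, sum_comm]
        simp only [sum_mul, sum_const, card_univ, Fintype.card_fin, nsmul_eq_mul]
        ring
    _ ≤ ∑ k, 2 * τ * ρk k + n * ρ * S := by
        gcongr with k
        · exact (hρk k).le
        · exact hincr k
    _ = 2 * τ * ∑ k, ρk k + n * ρ * S := by rw [mul_sum]

theorem stmt_5 (n m ℓ : ℕ) (hn : 0 < n) (hm : 0 < m) (hℓ : 0 < ℓ)
    (J : Fin ℓ → Finset (Fin m)) (hne : ∀ k, (J k).Nonempty)
    (hcover : ∀ j : Fin m, ∃ k, j ∈ J k)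
    (hcontig : ∀ k, ∀ j₁ ∈ J k, ∀ j₂ ∈ J k, ∀ j : Fin m, j₁ ≤ j → j ≤ j₂ → j ∈ J k)
    (horder : ∀ k k' : Fin ℓ, k < k' → ∀ j ∈ J k, ∀ j' ∈ J k', j < j')
    (A : Fin n → Fin m → ℝ)
    (hA01 : ∀ i j, A i j ∈ Set.Icc (0:ℝ) 1)
    (hrow : ∀ i, Monotone (A i))
    (hcol : ∀ j, Monotone fun i => A i j)
    (τ : ℝ) (hτ : 0 ≤ τ)
    (hτbd : ∀ k, ∑ i, (A i ((J k).max' (hne k)) - A i ((J k).min' (hne k))) ≤ τ)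
    (ρ : ℝ) (ρk : Fin ℓ → ℝ) (hρ : 0 < ρ) (hρk : ∀ k, 0 < ρk k)
    (π : Equiv.Perm (Fin n))
    (hrowbd : ∀ i, ∑ j, |A (π i) j - A i j| ≤ ρ)
    (hblockbd : ∀ i k, ∑ j ∈ J k, |A (π i) j - A i j| ≤ ρk k) :
    haveI : Nonempty (Fin ℓ) := Fin.pos_iff_nonempty.mp hℓ
    ∑ i, ∑ j, (A (π i) j - A i j) ^ 2 ≤
      2 * τ * ∑ k, ρk k +
        n * ρ * Finset.univ.sup' Finset.univ_nonempty (fun k => ρk k / (J k).card) :=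
  stmt_5_general n m ℓ hℓ J hne hcover horder A hrow τ hτbd ρ ρk hρk π hrowbd hblockbd
end

section
/- Let n, m ≥ 1 and A ∈ [0,1]^{n×m} have nondecreasing rows and nondecreasing columns. Let J ⊆ {1,...,m} be a contiguous interval with endpoints a = min J, b = max J and cardinality m_J. Then for any i ≤ i₂ in {1,...,n} and any j ∈ J: A_{i₂,j} − A_{i,j} ≤ (A_{i₂,b} − A_{i₂,a}) + (A_{i,b} − A_{i,a}) + (1/m_J)·Σ_{r∈J} (A_{i₂,r} − A_{i,r}). -/
theorem stmt_6 (n m : ℕ) (hn : 0 < n) (hm : 0 < m)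
    (A : Fin n → Fin m → ℝ)
    (hA01 : ∀ i j, A i j ∈ Set.Icc (0:ℝ) 1)
    (hrow : ∀ i, Monotone (A i))
    (hcol : ∀ j, Monotone fun i => A i j)
    (J : Finset (Fin m)) (hJ : J.Nonempty)
    (hcontig : ∀ j₁ ∈ J, ∀ j₂ ∈ J, ∀ j : Fin m, j₁ ≤ j → j ≤ j₂ → j ∈ J)
    (i i₂ : Fin n) (hi : i ≤ i₂) (j : Fin m) (hj : j ∈ J) :
    A i₂ j - A i j ≤
      (A i₂ (J.max' hJ) - A i₂ (J.min' hJ)) + (A i (J.max' hJ) - A i (J.min' hJ)) +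
        (1 / J.card) * ∑ r ∈ J, (A i₂ r - A i r) := by
  set c : ℝ := (1 / J.card) * ∑ r ∈ J, (A i₂ r - A i r) with hc
  have hcard : (0:ℝ) < J.card := by exact_mod_cast hJ.card_pos
  -- there is j₂ ∈ J with A i₂ j₂ - A i j₂ ≤ c (average argument)
  obtain ⟨j₂, hj₂, hle⟩ : ∃ j₂ ∈ J, A i₂ j₂ - A i j₂ ≤ c := by
    by_contra h
    push_neg at h
    have hsum : ∑ r ∈ J, c < ∑ r ∈ J, (A i₂ r - A i r) :=
      Finset.sum_lt_sum_of_nonempty hJ h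
    rw [Finset.sum_const, nsmul_eq_mul, hc] at hsum
    have : (J.card : ℝ) * ((1 / J.card) * ∑ r ∈ J, (A i₂ r - A i r))
        = ∑ r ∈ J, (A i₂ r - A i r) := by
      field_simp
    rw [this] at hsum
    exact lt_irrefl _ hsum
  have hja : J.min' hJ ≤ j₂ := J.min'_le _ hj₂
  have hjb : j₂ ≤ J.max' hJ := J.le_max' _ hj₂
  have h1 : A i₂ j ≤ A i₂ (J.max' hJ) := hrow i₂ (J.le_max' _ hj)
  have h2 : A i (J.min' hJ) ≤ A i j := hrow i (J.min'_le _ hj)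
  have h3 : A i₂ (J.min' hJ) ≤ A i₂ j₂ := hrow i₂ hja
  have h4 : A i j₂ ≤ A i (J.max' hJ) := hrow i hjb
  linarith
end
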